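/- arXiv:1203.6028 — 4 statements merged into one kernel-verified Lean document; each statement's English description precedes it below -/
import Mathlib

section
/- For a stochastic matrix M ∈ ℝ^{n×n}, define δ(M) = max_j max_{α,β} |m_{αj} - m_{βj}| and λ(M) = 1 - min_{α,β} ∑_j min(m_{αj}, m_{βj}). Then for any stochastic matrices M₁, …, M_k, δ(M_k ⋯ M₂ M₁) ≤ ∏_{i=1}^k λ(M_i). -/
noncomputable def deltaCoeff {n : ℕ} (M : Matrix (Fin n) (Fin n) ℝ) : ℝ :=
  ⨆ j, ⨆ a, ⨆ b, |M a j - M b j|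

noncomputable def lambdaCoeff {n : ℕ} (M : Matrix (Fin n) (Fin n) ℝ) : ℝ :=
  1 - ⨅ a, ⨅ b, ∑ j, min (M a j) (M b j)

section aux

variable {n : ℕ} [NeZero n]

lemma bddA (f : Fin n → ℝ) : BddAbove (Set.range f) :=
  (Set.finite_range f).bddAbove

lemma bddB (f : Fin n → ℝ) : BddBelow (Set.range f) :=
  (Set.finite_range f).bddBelow

lemma abs_le_delta (P : Matrix (Fin n) (Fin n) ℝ) (j a b : Fin n) :
    |P a j - P b j| ≤ deltaCoeff P := by
  have h1 : |P a j - P b j| ≤ ⨆ b, |P a j - P b j| :=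
    le_ciSup (f := fun b => |P a j - P b j|) (bddA _) b
  have h2 : (⨆ b, |P a j - P b j|) ≤ ⨆ a, ⨆ b, |P a j - P b j| :=
    le_ciSup (f := fun a => ⨆ b, |P a j - P b j|) (bddA _) a
  have h3 : (⨆ a, ⨆ b, |P a j - P b j|) ≤ deltaCoeff P :=
    le_ciSup (f := fun j => ⨆ a, ⨆ b, |P a j - P b j|) (bddA _) j
  linarith

lemma delta_nonneg (P : Matrix (Fin n) (Fin n) ℝ) : 0 ≤ deltaCoeff P := by
  have := abs_le_delta P 0 0 0
  simpa using this.trans_eq' (by simp)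

lemma lambda_ge (A : Matrix (Fin n) (Fin n) ℝ) (a b : Fin n) :
    1 - ∑ j, min (A a j) (A b j) ≤ lambdaCoeff A := by
  have h1 : (⨅ b, ∑ j, min (A a j) (A b j)) ≤ ∑ j, min (A a j) (A b j) :=
    ciInf_le (bddB _) b
  have h2 : (⨅ a, ⨅ b, ∑ j, min (A a j) (A b j)) ≤ ⨅ b, ∑ j, min (A a j) (A b j) :=
    ciInf_le (bddB _) a
  unfold lambdaCoeff
  linarith

lemma key_step (A P : Matrix (Fin n) (Fin n) ℝ)
    (hA0 : ∀ a b, 0 ≤ A a b) (hA1 : ∀ a, ∑ b, A a b = 1) :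
    deltaCoeff (A * P) ≤ lambdaCoeff A * deltaCoeff P := by
  refine ciSup_le fun j => ciSup_le fun a => ciSup_le fun b => ?_
  set s : ℝ := 1 - ∑ i, min (A a i) (A b i) with hs
  have hδ : 0 ≤ deltaCoeff P := delta_nonneg P
  have hsl : s ≤ lambdaCoeff A := lambda_ge A a b
  -- p and q
  set p : Fin n → ℝ := fun i => A a i - min (A a i) (A b i) with hp
  set q : Fin n → ℝ := fun i => A b i - min (A a i) (A b i) with hq
  have hp0 : ∀ i, 0 ≤ p i := fun i => by simp [hp, min_le_left]
  have hq0 : ∀ i, 0 ≤ q i := fun i => by simp [hq, min_le_right]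
  have hps : ∑ i, p i = s := by
    simp [hp, Finset.sum_sub_distrib, hA1 a, hs]
  have hqs : ∑ i, q i = s := by
    simp [hq, Finset.sum_sub_distrib, hA1 b, hs]
  have hs0 : 0 ≤ s := hps ▸ Finset.sum_nonneg fun i _ => hp0 i
  -- extreme rows
  obtain ⟨imax, -, hmax⟩ := Finset.exists_max_image Finset.univ (fun i => P i j)
    ⟨0, Finset.mem_univ 0⟩
  obtain ⟨imin, -, hmin⟩ := Finset.exists_min_image Finset.univ (fun i => P i j)
    ⟨0, Finset.mem_univ 0⟩
  have hgap : P imax j - P imin j ≤ deltaCoeff P :=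
    (le_abs_self _).trans (abs_le_delta P j imax imin)
  have hdiff : (A * P) a j - (A * P) b j = ∑ i, p i * P i j - ∑ i, q i * P i j := by
    simp only [Matrix.mul_apply, hp, hq]
    rw [← Finset.sum_sub_distrib, ← Finset.sum_sub_distrib]
    congr 1; ext i; ring
  have hup : ∑ i, p i * P i j ≤ s * P imax j := by
    calc ∑ i, p i * P i j ≤ ∑ i, p i * P imax j :=
          Finset.sum_le_sum fun i _ =>
            mul_le_mul_of_nonneg_left (hmax i (Finset.mem_univ i)) (hp0 i)
      _ = s * P imax j := by rw [← Finset.sum_mul, hps]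
  have hlo : s * P imin j ≤ ∑ i, q i * P i j := by
    calc s * P imin j = ∑ i, q i * P imin j := by rw [← Finset.sum_mul, hqs]
      _ ≤ ∑ i, q i * P i j :=
          Finset.sum_le_sum fun i _ =>
            mul_le_mul_of_nonneg_left (hmin i (Finset.mem_univ i)) (hq0 i)
  have hup' : ∑ i, q i * P i j ≤ s * P imax j := by
    calc ∑ i, q i * P i j ≤ ∑ i, q i * P imax j :=
          Finset.sum_le_sum fun i _ =>
            mul_le_mul_of_nonneg_left (hmax i (Finset.mem_univ i)) (hq0 i)
      _ = s * P imax j := by rw [← Finset.sum_mul, hqs]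
  have hlo' : s * P imin j ≤ ∑ i, p i * P i j := by
    calc s * P imin j = ∑ i, p i * P imin j := by rw [← Finset.sum_mul, hps]
      _ ≤ ∑ i, p i * P i j :=
          Finset.sum_le_sum fun i _ =>
            mul_le_mul_of_nonneg_left (hmin i (Finset.mem_univ i)) (hp0 i)
  have hsgap : s * (P imax j - P imin j) ≤ s * deltaCoeff P :=
    mul_le_mul_of_nonneg_left hgap hs0
  have habs : |(A * P) a j - (A * P) b j| ≤ s * deltaCoeff P := by
    rw [hdiff, abs_sub_le_iff]
    constructor <;> nlinarith
  exact habs.trans (mul_le_mul_of_nonneg_right hsl hδ)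

lemma delta_one_le : deltaCoeff (1 : Matrix (Fin n) (Fin n) ℝ) ≤ 1 := by
  refine ciSup_le fun j => ciSup_le fun a => ciSup_le fun b => ?_
  simp only [Matrix.one_apply]
  split_ifs <;> norm_num

end aux

theorem delta_prod_le (n k : ℕ) [NeZero n] (M : Fin k → Matrix (Fin n) (Fin n) ℝ)
    (hstoch : ∀ i, (∀ a b, 0 ≤ M i a b) ∧ ∀ a, ∑ b, M i a b = 1) :
    deltaCoeff (List.ofFn M).prod ≤ ∏ i, lambdaCoeff (M i) := by
  induction k with
  | zero => simpa using delta_one_le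
  | succ k ih =>
    rw [List.ofFn_succ, List.prod_cons, Fin.prod_univ_succ]
    have h1 := key_step (M 0) (List.ofFn fun i : Fin k => M i.succ).prod
      (hstoch 0).1 (hstoch 0).2
    have h2 := ih (fun i => M i.succ) (fun i => hstoch i.succ)
    have hl0 : (0:ℝ) ≤ lambdaCoeff (M 0) := by
      have h := lambda_ge (M 0) 0 0
      have : ∑ j, min (M 0 0 j) (M 0 0 j) = 1 := by simp [(hstoch 0).2 0]
      linarith
    calc deltaCoeff (M 0 * (List.ofFn fun i : Fin k => M i.succ).prod)
        ≤ lambdaCoeff (M 0) * deltaCoeff (List.ofFn fun i : Fin k => M i.succ).prod := h1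
      _ ≤ lambdaCoeff (M 0) * ∏ i : Fin k, lambdaCoeff (M i.succ) :=
          mul_le_mul_of_nonneg_left h2 hl0
end

section
/- Let n ≥ 1 and let M₁, M₂ ∈ ℝ^{n×n} be stochastic matrices all of whose nonzero entries are ≥ 1/2 and all of whose diagonal entries are positive. Then for any indices i, j: the (i,j)-entry of M₂·M₁ is positive whenever the (i,j)-entry of M₁ is positive or the (i,j)-entry of M₂ is positive, and every nonzero entry of M₂·M₁ is ≥ 1/4. -/
theorem prod_entry_pos_and_bound (n : ℕ) (hn : 1 ≤ n)
    (M₁ M₂ : Matrix (Fin n) (Fin n) ℝ)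
    (h1nonneg : ∀ a b, 0 ≤ M₁ a b) (h1row : ∀ a, ∑ b, M₁ a b = 1)
    (h2nonneg : ∀ a b, 0 ≤ M₂ a b) (h2row : ∀ a, ∑ b, M₂ a b = 1)
    (h1lb : ∀ a b, M₁ a b ≠ 0 → 1/2 ≤ M₁ a b)
    (h2lb : ∀ a b, M₂ a b ≠ 0 → 1/2 ≤ M₂ a b)
    (h1diag : ∀ a, 0 < M₁ a a) (h2diag : ∀ a, 0 < M₂ a a) :
    (∀ i j, (0 < M₁ i j ∨ 0 < M₂ i j) → 0 < (M₂ * M₁) i j) ∧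
      (∀ i j, (M₂ * M₁) i j ≠ 0 → 1/4 ≤ (M₂ * M₁) i j) := by
  have key : ∀ i j k, M₂ i k * M₁ k j ≤ (M₂ * M₁) i j := by
    intro i j k
    rw [Matrix.mul_apply]
    exact Finset.single_le_sum (fun b _ => mul_nonneg (h2nonneg i b) (h1nonneg b j))
      (Finset.mem_univ k)
  constructor
  · intro i j h
    rcases h with h | h
    · exact lt_of_lt_of_le (mul_pos (h2diag i) h) (key i j i)
    · exact lt_of_lt_of_le (mul_pos h (h1diag j)) (key i j j)
  · intro i j h
    rw [Matrix.mul_apply] at h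
    obtain ⟨k, -, hk⟩ := Finset.exists_ne_zero_of_sum_ne_zero h
    have h2 := h2lb i k (fun h0 => hk (by simp [h0]))
    have h1 := h1lb k j (fun h0 => hk (by simp [h0]))
    calc (1:ℝ)/4 = (1/2) * (1/2) := by norm_num
    _ ≤ M₂ i k * M₁ k j := by
        exact mul_le_mul h2 h1 (by norm_num) (h2nonneg i k)
    _ ≤ _ := key i j k
end

section
/- Let n = 2n₀ + 1 be an odd integer with n₀ ≥ 1, let k ≥ 1, and let M₁, …, M_k be matrices each of the form I - (e_i - e_j)(e_i - e_j)ᵀ/2 for some i > j. Then the product M_k ⋯ M₁ is not of the form 𝟙·βᵀ for any vector β ∈ ℝⁿ; equivalently, δ(M_k ⋯ M₁) > 0. -/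
/-!
Every factor `1 - ½ (eᵢ - eⱼ)(eᵢ - eⱼ)ᵀ` has column sums `1`, so the product does too; if the
product had all rows equal to `β`, then `n β_b = 1`, i.e. every entry would be `1/n`. On the other
hand every factor is half an integer matrix, so `2ᵏ` times the product is an integer matrix and
`2ᵏ / n` would be an integer, which is impossible for odd `n > 1`.
-/

open Matrix

section

variable {ι R : Type*}

theorem vecMul_list_prod_eq_self [Fintype ι] [DecidableEq ι] [Semiring R] {v : ι → R}
    {L : List (Matrix ι ι R)} (h : ∀ A ∈ L, v ᵥ* A = v) : v ᵥ* L.prod = v := by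
  induction L with
  | nil => exact vecMul_one v
  | cons A L ih =>
    rw [List.prod_cons, ← vecMul_vecMul, h A List.mem_cons_self,
      ih fun B hB => h B (List.mem_cons_of_mem A hB)]

theorem one_vecMul_one_sub_smul_vecMulVec [Fintype ι] [DecidableEq ι] [CommRing R] {v : ι → R}
    (hv : 1 ⬝ᵥ v = 0) (c : R) : (1 : ι → R) ᵥ* (1 - c • vecMulVec v v) = 1 := by
  rw [vecMul_sub, vecMul_one, vecMul_smul, vecMul_vecMulVec, hv, zero_smul, smul_zero, sub_zero]

theorem one_dotProduct_single_sub_single [Fintype ι] [DecidableEq ι] [Ring R] (i j : ι) :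
    1 ⬝ᵥ (Pi.single i 1 - Pi.single j 1 : ι → R) = 0 := by
  simp [dotProduct_sub]

theorem card_mul_eq_one_of_one_vecMul_replicateRow [Fintype ι] [Semiring R] {β : ι → R}
    (h : (1 : ι → R) ᵥ* replicateRow ι β = 1) (b : ι) : (Fintype.card ι : R) * β b = 1 := by
  simpa [vecMul, dotProduct, replicateRow, nsmul_eq_mul] using congrFun h b

theorem exists_int_pow_smul_list_prod [Fintype ι] [DecidableEq ι] [CommRing R] (c : R)
    {L : List (Matrix ι ι R)} (h : ∀ A ∈ L, ∃ N : Matrix ι ι ℤ, c • A = N.map (Int.cast : ℤ → R)) :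
    ∃ N : Matrix ι ι ℤ, c ^ L.length • L.prod = N.map (Int.cast : ℤ → R) := by
  induction L with
  | nil => exact ⟨1, by simp [Matrix.map_one]⟩
  | cons A L ih =>
    obtain ⟨NA, hNA⟩ := h A List.mem_cons_self
    obtain ⟨NL, hNL⟩ := ih fun B hB => h B (List.mem_cons_of_mem A hB)
    refine ⟨NA * NL, ?_⟩
    rw [List.prod_cons, List.length_cons, pow_succ', ← smul_mul_smul_comm, hNA, hNL]
    exact (Matrix.map_mul (f := Int.castRingHom R)).symm

theorem exists_int_two_smul_one_sub_half_smul_vecMulVec [DecidableEq ι] [Field R]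
    [NeZero (2 : R)] (i j : ι) :
    ∃ N : Matrix ι ι ℤ, (2 : R) • (1 - (1 / 2 : R) • vecMulVec (Pi.single i 1 - Pi.single j 1)
      (Pi.single i 1 - Pi.single j 1)) = N.map (Int.cast : ℤ → R) := by
  refine ⟨2 - vecMulVec (Pi.single i 1 - Pi.single j 1) (Pi.single i 1 - Pi.single j 1), ?_⟩
  rw [smul_sub, smul_smul, mul_one_div_cancel two_ne_zero, one_smul]
  ext a b
  simp only [Matrix.sub_apply, Matrix.smul_apply, map_apply, vecMulVec_apply, Pi.sub_apply,
    Pi.single_apply, one_apply, ofNat_apply, smul_eq_mul]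
  split_ifs <;> norm_num

end

theorem eq_one_of_odd_of_dvd_two_pow {n k : ℕ} (hn : Odd n) (h : n ∣ 2 ^ k) : n = 1 :=
  (hn.coprime_two_right.pow_right k).eq_one_of_dvd h

theorem no_finite_consensus_odd_general (n₀ : ℕ) (hn₀ : 1 ≤ n₀) (k : ℕ)
    (M : Fin k → Matrix (Fin (2 * n₀ + 1)) (Fin (2 * n₀ + 1)) ℝ)
    (hM : ∀ t, ∃ i j : Fin (2 * n₀ + 1), j < i ∧
      M t = 1 - (1/2 : ℝ) • vecMulVec (Pi.single i 1 - Pi.single j 1)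
        (Pi.single i 1 - Pi.single j 1)) :
    ¬ ∃ β : Fin (2 * n₀ + 1) → ℝ,
      (List.ofFn M).prod = Matrix.of (fun _ b => β b) := by
  rintro ⟨β, hβ⟩
  have hcol : (1 : Fin (2 * n₀ + 1) → ℝ) ᵥ* (List.ofFn M).prod = 1 := by
    refine vecMul_list_prod_eq_self fun A hA => ?_
    obtain ⟨t, rfl⟩ := List.mem_ofFn.1 hA
    obtain ⟨i, j, -, hMt⟩ := hM t
    exact hMt ▸ one_vecMul_one_sub_smul_vecMulVec (one_dotProduct_single_sub_single i j) _
  have hβ0 := card_mul_eq_one_of_one_vecMul_replicateRow (hβ ▸ hcol) 0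
  obtain ⟨N, hN⟩ := exists_int_pow_smul_list_prod (2 : ℝ) (L := List.ofFn M) fun A hA => by
    obtain ⟨t, rfl⟩ := List.mem_ofFn.1 hA
    obtain ⟨i, j, -, hMt⟩ := hM t
    exact hMt ▸ exists_int_two_smul_one_sub_half_smul_vecMulVec i j
  have h00 : (2 : ℝ) ^ k * β 0 = N 0 0 := by
    simpa [hβ] using congrFun (congrFun hN 0) 0
  have hdvd : 2 * n₀ + 1 ∣ 2 ^ k := by
    refine Int.natCast_dvd_natCast.1 ⟨N 0 0, ?_⟩
    have : ((2 : ℤ) ^ k : ℝ) = ((2 * n₀ + 1) * N 0 0 : ℤ) := by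
      rw [Fintype.card_fin] at hβ0
      push_cast at hβ0 ⊢
      rw [← h00]
      linear_combination -(2 : ℝ) ^ k * hβ0
    exact_mod_cast this
  have := eq_one_of_odd_of_dvd_two_pow (odd_two_mul_add_one n₀) hdvd
  omega

theorem no_finite_consensus_odd (n₀ : ℕ) (hn₀ : 1 ≤ n₀) (k : ℕ) (hk : 1 ≤ k)
    (M : Fin k → Matrix (Fin (2 * n₀ + 1)) (Fin (2 * n₀ + 1)) ℝ)
    (hM : ∀ t, ∃ i j : Fin (2 * n₀ + 1), j < i ∧
      M t = 1 - (1/2 : ℝ) • vecMulVec (Pi.single i 1 - Pi.single j 1)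
        (Pi.single i 1 - Pi.single j 1)) :
    ¬ ∃ β : Fin (2 * n₀ + 1) → ℝ,
      (List.ofFn M).prod = Matrix.of (fun _ b => β b) :=
  no_finite_consensus_odd_general n₀ hn₀ k M hM
end

section
/- Let n be odd, and suppose M₁, …, M_k are each of the form I - (e_i - e_j)(e_i - e_j)ᵀ/2 with i ≠ j. Let y ∈ ℝⁿ have y_i = 0 for i = 1,…,n₀ and y_i = 2^{k+1} for i = n₀+1,…,2n₀+1, where n = 2n₀+1. Then every coordinate of M_k ⋯ M₁ y is an even integer, while the average (1/n)·∑ y_i = 2^{k+1}(n₀+1)/(2n₀+1) is not an even integer. -/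
/-! Averaging two multiples of `2 ^ (r + 1)` gives a multiple of `2 ^ r`, so `k` averagings
turn coordinates in `2 ^ (k + 1) ℤ` into coordinates in `2 ℤ`. The average of `y`, however, is
`2 ^ (k + 1) (n₀ + 1) / (2 n₀ + 1)`: the odd number `2 n₀ + 1` is coprime to `2 ^ k` and larger
than `n₀ + 1`, so this is not an even integer. -/

open Matrix

section Averaging

variable {ι R : Type*} [DecidableEq ι] [Field R]

def averagingMatrix (i j : ι) : Matrix ι ι R :=
  1 - (1/2 : R) • vecMulVec (Pi.single i 1 - Pi.single j 1) (Pi.single i 1 - Pi.single j 1)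

variable [Fintype ι]

theorem averagingMatrix_mulVec (i j : ι) (v : ι → R) :
    averagingMatrix i j *ᵥ v = v - ((v i - v j) / 2) • (Pi.single i 1 - Pi.single j 1) := by
  simp only [averagingMatrix, sub_mulVec, one_mulVec, smul_mulVec, vecMulVec_mulVec,
    sub_dotProduct, single_dotProduct, one_mul]
  ext a
  simp
  ring

theorem averagingMatrix_mulVec_apply_left [NeZero (2 : R)] {i j : ι} (hij : i ≠ j) (v : ι → R) :
    (averagingMatrix i j *ᵥ v) i = (v i + v j) / 2 := by
  rw [averagingMatrix_mulVec]
  simp [hij]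
  field_simp
  ring

theorem averagingMatrix_mulVec_apply_right [NeZero (2 : R)] {i j : ι} (hij : i ≠ j) (v : ι → R) :
    (averagingMatrix i j *ᵥ v) j = (v i + v j) / 2 := by
  rw [averagingMatrix_mulVec]
  simp [hij.symm]
  field_simp
  ring

theorem averagingMatrix_mulVec_apply_of_ne {i j a : ι} (hai : a ≠ i) (haj : a ≠ j) (v : ι → R) :
    (averagingMatrix i j *ᵥ v) a = v a := by
  simp [averagingMatrix_mulVec, hai, haj]

theorem exists_int_averagingMatrix_mulVec_apply {i j : ι} (hij : i ≠ j) {r : ℕ} {v : ι → ℝ}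
    (hv : ∀ a, ∃ m : ℤ, v a = 2 ^ (r + 1) * m) (a : ι) :
    ∃ m : ℤ, (averagingMatrix i j *ᵥ v) a = 2 ^ r * m := by
  obtain ⟨mi, hmi⟩ := hv i
  obtain ⟨mj, hmj⟩ := hv j
  have hmid : ∃ m : ℤ, (v i + v j) / 2 = 2 ^ r * m :=
    ⟨mi + mj, by rw [hmi, hmj]; push_cast; ring⟩
  by_cases hai : a = i
  · rwa [hai, averagingMatrix_mulVec_apply_left hij]
  by_cases haj : a = j
  · rwa [haj, averagingMatrix_mulVec_apply_right hij]
  obtain ⟨ma, hma⟩ := hv a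
  exact ⟨2 * ma, by rw [averagingMatrix_mulVec_apply_of_ne hai haj, hma]; push_cast; ring⟩

theorem exists_int_list_prod_mulVec_apply {L : List (Matrix ι ι ℝ)}
    (hL : ∀ A ∈ L, ∃ i j : ι, i ≠ j ∧ A = averagingMatrix i j) {r : ℕ} {v : ι → ℝ}
    (hv : ∀ a, ∃ m : ℤ, v a = 2 ^ (L.length + r) * m) (a : ι) :
    ∃ m : ℤ, (L.prod *ᵥ v) a = 2 ^ r * m := by
  induction L generalizing r a with
  | nil => simpa using hv a
  | cons A L ih =>
    obtain ⟨i, j, hij, rfl⟩ := hL A List.mem_cons_self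
    rw [List.length_cons, add_right_comm] at hv
    rw [List.prod_cons, ← mulVec_mulVec]
    exact exists_int_averagingMatrix_mulVec_apply hij
      (ih (fun B hB => hL B (List.mem_cons_of_mem _ hB)) hv) a

end Averaging

theorem sum_fin_ite_lt {M : Type*} [AddCommMonoid M] {m n : ℕ} (c : M) :
    ∑ i : Fin n, (if (i : ℕ) < m then 0 else c) = (n - m) • c := by
  rw [Fin.sum_univ_eq_sum_range (fun i => if i < m then 0 else c), Finset.sum_ite,
    Finset.sum_const_zero, zero_add, Finset.sum_const, Finset.range_eq_Ico]
  simp only [not_lt, Finset.Ico_filter_le, Nat.card_Ico, zero_max]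

theorem not_dvd_two_pow_mul_succ {n₀ : ℕ} (hn₀ : 1 ≤ n₀) (k : ℕ) :
    ¬ (2 * n₀ + 1) ∣ 2 ^ k * (n₀ + 1) := by
  intro h
  have hcop : Nat.Coprime (2 * n₀ + 1) (2 ^ k) :=
    Nat.Coprime.pow_right k (by simp [Nat.coprime_two_right])
  have := Nat.le_of_dvd (Nat.succ_pos n₀) (hcop.dvd_of_dvd_mul_left h)
  omega

theorem averaging_even_coords_general (n₀ : ℕ) (hn₀ : 1 ≤ n₀) (k : ℕ)
    (M : Fin k → Matrix (Fin (2 * n₀ + 1)) (Fin (2 * n₀ + 1)) ℝ)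
    (hM : ∀ t, ∃ i j : Fin (2 * n₀ + 1), i ≠ j ∧
      M t = 1 - (1/2 : ℝ) • vecMulVec (Pi.single i 1 - Pi.single j 1)
        (Pi.single i 1 - Pi.single j 1))
    (y : Fin (2 * n₀ + 1) → ℝ)
    (hy : ∀ i, y i = if (i : ℕ) < n₀ then 0 else 2 ^ (k + 1)) :
    (∀ a, ∃ m : ℤ, ((List.ofFn M).prod.mulVec y) a = 2 * m) ∧
      ((∑ i, y i) / (2 * n₀ + 1) = (2 ^ (k + 1) * (n₀ + 1) : ℝ) / (2 * n₀ + 1) ∧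
        ¬ ∃ m : ℤ, (∑ i, y i) / (2 * n₀ + 1) = 2 * m) := by
  have hsum : ∑ i, y i = (2 ^ (k + 1) * (n₀ + 1) : ℝ) := by
    rw [Finset.sum_congr rfl fun i _ => hy i, sum_fin_ite_lt,
      show 2 * n₀ + 1 - n₀ = n₀ + 1 by omega, nsmul_eq_mul]
    push_cast
    ring
  refine ⟨fun a => ?_, by rw [hsum], ?_⟩
  · have hL : ∀ A ∈ List.ofFn M, ∃ i j, i ≠ j ∧ A = averagingMatrix i j := fun A hA => by
      obtain ⟨t, rfl⟩ := List.mem_ofFn.mp hA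
      exact hM t
    have hy' : ∀ a, ∃ m : ℤ, y a = 2 ^ ((List.ofFn M).length + 1) * m := fun a => by
      rw [hy a, List.length_ofFn]
      split_ifs
      exacts [⟨0, by simp⟩, ⟨1, by simp⟩]
    simpa using exists_int_list_prod_mulVec_apply hL hy' a
  · rintro ⟨m, hm⟩
    rw [hsum, div_eq_iff (by positivity)] at hm
    have hZ : (2 : ℤ) ^ k * (n₀ + 1) = (2 * n₀ + 1) * m := by
      have : (2 : ℝ) ^ k * (n₀ + 1) = (2 * n₀ + 1) * m := by linear_combination hm / 2
      exact_mod_cast this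
    exact not_dvd_two_pow_mul_succ hn₀ k (Int.natCast_dvd_natCast.mp ⟨m, by push_cast; exact hZ⟩)

theorem averaging_even_coords (n₀ : ℕ) (hn₀ : 1 ≤ n₀) (k : ℕ) (hk : 1 ≤ k)
    (M : Fin k → Matrix (Fin (2 * n₀ + 1)) (Fin (2 * n₀ + 1)) ℝ)
    (hM : ∀ t, ∃ i j : Fin (2 * n₀ + 1), i ≠ j ∧
      M t = 1 - (1/2 : ℝ) • vecMulVec (Pi.single i 1 - Pi.single j 1)
        (Pi.single i 1 - Pi.single j 1))
    (y : Fin (2 * n₀ + 1) → ℝ)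
    (hy : ∀ i, y i = if (i : ℕ) < n₀ then 0 else 2 ^ (k + 1)) :
    (∀ a, ∃ m : ℤ, ((List.ofFn M).prod.mulVec y) a = 2 * m) ∧
      ((∑ i, y i) / (2 * n₀ + 1) = (2 ^ (k + 1) * (n₀ + 1) : ℝ) / (2 * n₀ + 1) ∧
        ¬ ∃ m : ℤ, (∑ i, y i) / (2 * n₀ + 1) = 2 * m) :=
  averaging_even_coords_general n₀ hn₀ k M hM y hy
end
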